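/- Every nonempty word w admits an inverse Lyndon factorization, i.e., a sequence (m_1, ..., m_k) of inverse Lyndon words with w = m_1 ⋯ m_k and m_1 ≪ m_2 ≪ ... ≪ m_k. Moreover, if w is a Lyndon word which is not a single letter, then every inverse Lyndon factorization of w has at least two factors (k > 1). -/

import Mathlib

def LexLt {α : Type*} [LinearOrder α] (x y : List α) : Prop :=
  List.Lex (· < ·) x y

def LexLl {α : Type*} [LinearOrder α] (x y : List α) : Prop :=
  LexLt x y ∧ ¬ (x <+: y ∧ x ≠ y)

def IsInvLyndonWord {α : Type*} [LinearOrder α] (w : List α) : Prop :=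
  w ≠ [] ∧ ∀ s : List α, s <:+ w → s ≠ w → s ≠ [] → LexLt s w

def IsLyndonWord {α : Type*} [LinearOrder α] (w : List α) : Prop :=
  w ≠ [] ∧ ∀ s : List α, s <:+ w → s ≠ w → s ≠ [] → LexLt w s

def IsInvLyndonFact {α : Type*} [LinearOrder α] (w : List α) (ms : List (List α)) : Prop :=
  ms ≠ [] ∧ w = ms.flatten ∧ (∀ m ∈ ms, IsInvLyndonWord m) ∧ ms.Chain' LexLl

/-!
Split off the longest inverse Lyndon suffix `m` of `w = u ++ m` and recurse on `u`. By
maximality, no `x ++ m` with `x` a nonempty suffix of `u` is inverse Lyndon; a suffix of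
`x ++ m` beating it is either a suffix of `m` or `s ++ m` for a shorter suffix `s` of `x`, and
induction on `x` turns this into `x ≪ m`. Applied to the last factor of `u` this gives the
chain condition. A Lyndon word `a :: t` with `t ≠ []` satisfies `a :: t ≺ t`, so it is not
inverse Lyndon and has no one-factor factorization.
-/

namespace List

variable {α : Type*} [LinearOrder α]

theorem lt_of_append_lt_append_left {c x y : List α} (h : c ++ x < c ++ y) : x < y := by
  by_contra h'
  exact append_left_le (l₁ := c) h' h

end List

section InverseLyndon

variable {α : Type*} [LinearOrder α] {m s x y z : List α}

theorem lexLt_iff_lt : LexLt x y ↔ x < y := Iff.rfl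

theorem lexLl_iff_forall_append_lt : LexLl x y ↔ ∀ u v, x ++ u < y ++ v := by
  refine ⟨fun h u v => ?_, fun h => ⟨lexLt_iff_lt.mpr (by simpa using h [] []), ?_⟩⟩
  · induction x generalizing y with
    | nil => exact absurd ⟨List.nil_prefix, fun e => lt_irrefl y (e ▸ h.1)⟩ h.2
    | cons a x ih =>
      obtain ⟨hlt, hpre⟩ := h
      cases y with
      | nil => exact absurd hlt (List.not_lt_nil _)
      | cons b y =>
        rcases List.cons_lt_cons_iff.mp hlt with hab | ⟨rfl, hxy⟩
        · exact List.Lex.rel hab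
        · exact List.Lex.cons (ih ⟨hxy, fun ⟨hp, hne⟩ =>
            hpre ⟨List.cons_prefix_cons.mpr ⟨rfl, hp⟩, by simpa using hne⟩⟩)
  · rintro ⟨⟨r, rfl⟩, -⟩
    exact lt_irrefl (x ++ r) (by simpa using h r [])

theorem LexLl.append (h : LexLl x y) (u v : List α) : LexLl (x ++ u) (y ++ v) :=
  lexLl_iff_forall_append_lt.mpr fun u' v' => by
    simpa using lexLl_iff_forall_append_lt.mp h (u ++ u') (v ++ v')

theorem LexLl.trans (hxy : LexLl x y) (hyz : LexLl y z) : LexLl x z :=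
  lexLl_iff_forall_append_lt.mpr fun u v =>
    calc x ++ u < y ++ [] := lexLl_iff_forall_append_lt.mp hxy u []
      _ = y := y.append_nil
      _ < z ++ v := by simpa using lexLl_iff_forall_append_lt.mp hyz [] v

theorem LexLl.lt (h : LexLl x y) : x < y := h.1

theorem lexLl_of_lt_of_not_prefix (hlt : x < y) (hxy : ¬ x <+: y) : LexLl x y :=
  ⟨hlt, fun h => hxy h.1⟩

theorem isInvLyndonWord_singleton (a : α) : IsInvLyndonWord [a] := by
  refine ⟨List.cons_ne_nil a [], fun s hs hne hs0 => ?_⟩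
  rcases List.suffix_cons_iff.mp hs with rfl | hs
  · exact absurd rfl hne
  · exact absurd (List.eq_nil_of_suffix_nil hs) hs0

theorem IsInvLyndonWord.le_of_suffix (hm : IsInvLyndonWord m) (hs : s <:+ m) (hs0 : s ≠ []) :
    s ≤ m := by
  rcases eq_or_ne s m with rfl | hne
  · exact le_rfl
  · exact (lexLt_iff_lt.mp (hm.2 s hs hne hs0)).le

theorem lexLl_of_append_lt (hm : IsInvLyndonWord m) (h : x ++ m < m) :
    LexLl x m := by
  by_cases hxm : x <+: m
  · obtain ⟨r, rfl⟩ := hxm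
    have hr : x ++ r < r := List.lt_of_append_lt_append_left (by simpa using h)
    have hr0 : r ≠ [] := by rintro rfl; simp at hr
    exact absurd (hm.le_of_suffix (List.suffix_append x r) hr0) (not_le.mpr hr)
  by_cases hmx : m <+: x
  · exact absurd h (List.IsPrefix.le (hmx.trans (List.prefix_append x m)))
  rcases lt_or_gt_of_ne (fun e : x = m => hxm (e ▸ List.prefix_refl x)) with hlt | hgt
  · exact lexLl_of_lt_of_not_prefix hlt hxm
  · have := lexLl_iff_forall_append_lt.mp (lexLl_of_lt_of_not_prefix hgt hmx) [] m
    exact absurd h (lt_asymm (by simpa using this))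

theorem lexLl_of_append_lt_append (hs : LexLl s m) (hsx : s <:+ x) (hne : s ≠ x)
    (h : x ++ m < s ++ m) : LexLl x m := by
  by_cases hxs : x <+: s
  · exact absurd (hsx.eq_of_length (hsx.length_le.antisymm hxs.length_le)) hne
  by_cases hsx' : s <+: x
  · obtain ⟨r, rfl⟩ := hsx'
    simpa using hs.append r []
  rcases lt_or_gt_of_ne (Ne.symm hne) with hlt | hgt
  · exact (lexLl_of_lt_of_not_prefix hlt hxs).trans hs
  · exact absurd h (lt_asymm ((lexLl_of_lt_of_not_prefix hgt hsx').append m m).lt)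

theorem lexLl_of_not_isInvLyndonWord_append (hm : IsInvLyndonWord m)
    (hxm : ¬ IsInvLyndonWord (x ++ m)) (ih : ∀ s, s <:+ x → s ≠ x → s ≠ [] → LexLl s m) :
    LexLl x m := by
  obtain ⟨t, htxm, htne, ht0, hlt⟩ :
      ∃ t, t <:+ x ++ m ∧ t ≠ x ++ m ∧ t ≠ [] ∧ x ++ m < t := by
    by_contra! hcon
    exact hxm ⟨by simp [hm.1], fun t h1 h2 h3 => (hcon t h1 h2 h3).lt_of_ne h2⟩
  rcases List.suffix_or_suffix_of_suffix htxm (List.suffix_append x m) with htm | ⟨s, rfl⟩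
  · exact lexLl_of_append_lt hm (hlt.trans_le (hm.le_of_suffix htm ht0))
  have hsx : s <:+ x := List.suffix_append_self_iff.mp htxm
  rcases eq_or_ne s [] with rfl | hs0
  · exact lexLl_of_append_lt hm (by simpa using hlt)
  have hne : s ≠ x := by rintro rfl; exact htne rfl
  exact lexLl_of_append_lt_append (ih s hsx hne hs0) hsx hne hlt

theorem lexLl_of_forall_suffix_not_isInvLyndonWord_append (hm : IsInvLyndonWord m) {u : List α}
    (hu : ∀ x, x <:+ u → x ≠ [] → ¬ IsInvLyndonWord (x ++ m)) :
    ∀ x, x <:+ u → x ≠ [] → LexLl x m := by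
  induction u with
  | nil => exact fun x hx hx0 => absurd (List.eq_nil_of_suffix_nil hx) hx0
  | cons a u ih =>
    have ih := ih fun y hy => hu y (hy.trans (List.suffix_cons a u))
    intro x hx hx0
    rcases List.suffix_cons_iff.mp hx with rfl | hx
    · refine lexLl_of_not_isInvLyndonWord_append hm (hu _ hx hx0) fun s hs hne => ?_
      exact ih s ((List.suffix_cons_iff.mp hs).resolve_left hne)
    · exact ih x hx hx0

theorem exists_eq_append_isInvLyndonWord_maximal {w : List α} (hw : w ≠ []) :
    ∃ u m, w = u ++ m ∧ IsInvLyndonWord m ∧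
      ∀ x, x <:+ u → x ≠ [] → ¬ IsInvLyndonWord (x ++ m) := by
  have hnil {v : List α} : ∀ x : List α, x <:+ [] → x ≠ [] → ¬ IsInvLyndonWord (x ++ v) :=
    fun x hx hx0 => absurd (List.eq_nil_of_suffix_nil hx) hx0
  induction w with
  | nil => exact absurd rfl hw
  | cons a w ih =>
    rcases eq_or_ne w [] with rfl | hw0
    · exact ⟨[], [a], rfl, isInvLyndonWord_singleton a, hnil⟩
    obtain ⟨u, m, rfl, hm, hmax⟩ := ih hw0
    by_cases h : IsInvLyndonWord (a :: u ++ m)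
    · exact ⟨[], a :: u ++ m, rfl, h, hnil⟩
    refine ⟨a :: u, m, rfl, hm, fun x hx => ?_⟩
    rcases List.suffix_cons_iff.mp hx with rfl | hx
    · exact fun _ => h
    · exact hmax x hx

theorem exists_isInvLyndonFact {w : List α} (hw : w ≠ []) : ∃ ms, IsInvLyndonFact w ms := by
  induction hn : w.length using Nat.strong_induction_on generalizing w with
  | _ n ih =>
    obtain ⟨u, m, rfl, hm, hmax⟩ := exists_eq_append_isInvLyndonWord_maximal hw
    rcases eq_or_ne u [] with rfl | hu
    · exact ⟨[m], by simp, by simp, by simpa using hm, List.IsChain.singleton m⟩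
    have hlen : u.length < n := by
      rw [← hn, List.length_append]
      have := List.length_pos_iff.mpr hm.1
      omega
    obtain ⟨ms, hms, rfl, hinv, hchain⟩ := ih _ hlen hu rfl
    refine ⟨ms ++ [m], by simp, by simp, ?_, hchain.append (.singleton m) ?_⟩
    · simpa [or_imp, forall_and] using ⟨hinv, hm⟩
    · simp only [List.head?_cons, Option.mem_def, Option.some.injEq, forall_eq']
      intro l hl
      obtain ⟨ls, rfl⟩ := List.getLast?_eq_some_iff.mp hl
      exact lexLl_of_forall_suffix_not_isInvLyndonWord_append hm hmax l (by simp)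
        (hinv l (by simp)).1

theorem IsLyndonWord.not_isInvLyndonWord {w : List α} (hL : IsLyndonWord w)
    (hw : ¬ ∃ a, w = [a]) : ¬ IsInvLyndonWord w := by
  obtain ⟨a, t, rfl⟩ := List.exists_cons_of_ne_nil hL.1
  have ht0 : t ≠ [] := by rintro rfl; exact hw ⟨a, rfl⟩
  have hne : t ≠ a :: t := by simp
  exact fun hI => lt_asymm (lexLt_iff_lt.mp (hL.2 t (List.suffix_cons a t) hne ht0))
    (hI.2 t (List.suffix_cons a t) hne ht0)

end InverseLyndon

theorem stmt13 {α : Type*} [LinearOrder α] (w : List α) (hw : w ≠ []) :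
    (∃ ms : List (List α), IsInvLyndonFact w ms) ∧
    (IsLyndonWord w → (¬ ∃ a : α, w = [a]) →
      ∀ ms : List (List α), IsInvLyndonFact w ms → 1 < ms.length) := by
  refine ⟨exists_isInvLyndonFact hw, fun hL hw1 ms ⟨hms, hflat, hinv, _⟩ => ?_⟩
  match ms, hms with
  | [m], _ => exact absurd (by simpa [hflat] using hinv) (hL.not_isInvLyndonWord hw1)
  | _ :: _ :: _, _ => simp
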